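/- Let ℬ = ⟨B_1, …, B_m⟩ ≤ M(n, 𝔽), let A ∈ M(n, 𝔽) be nonsingular, and define in M(2n, 𝔽) the matrices Y_i = [[A, B_i],[0,0]] and Z = [[0,0],[A,0]] (block form with n×n blocks). Let 𝒜 = ⟨Y_1, …, Y_m, Z⟩. Then disc(𝒜) = disc(ℬ), where disc(𝒞) = max{dim(U) − dim(𝒞(U)) : U a subspace}. -/

import Mathlib

/-!
Let `U' ≤ F^{2n}` and `U = {u : (0, u) ∈ U'}`. Then `dim U' = dim π₁(U') + dim U`, where `π₁` is
the projection onto the first block. Every `Y_i` sends `(0, u)` to `(B_i u, 0)`, so `ℬ(U) ⊕ 0`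
lies in `𝒜(U') ∩ E_1`, while `Z` sends `U'` onto `0 ⊕ A π₁(U')`, which has dimension `dim π₁(U')`
because `A` is invertible. Hence `dim 𝒜(U') ≥ dim π₁(U') + dim ℬ(U)`, and the discrepancy of `U'`
is at most that of `U`. Conversely `𝒜(0 ⊕ U) = ℬ(U) ⊕ 0`.
-/

open Submodule Module

/-- The image of a subspace `U` under a matrix space `A`: the span of all `a u`. -/
def msImage {F V V' : Type*} [Field F] [AddCommGroup V] [Module F V]
    [AddCommGroup V'] [Module F V']
    (A : Submodule F (V →ₗ[F] V')) (U : Submodule F V) : Submodule F V' :=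
  Submodule.span F {x | ∃ a ∈ A, ∃ u ∈ U, a u = x}

open Matrix

section msImage

variable {F V V' : Type*} [Field F] [AddCommGroup V] [Module F V] [AddCommGroup V'] [Module F V']

lemma apply_mem_msImage {A : Submodule F (V →ₗ[F] V')} {U : Submodule F V} {a : V →ₗ[F] V'}
    (ha : a ∈ A) {u : V} (hu : u ∈ U) : a u ∈ msImage A U :=
  subset_span ⟨a, ha, u, hu, rfl⟩

lemma msImage_mono {A : Submodule F (V →ₗ[F] V')} {U₁ U₂ : Submodule F V}
    (h : U₁ ≤ U₂) :
    msImage A U₁ ≤ msImage A U₂ :=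
  span_mono fun _ ⟨a, ha, u, hu, hx⟩ => ⟨a, ha, u, h hu, hx⟩

lemma msImage_span_le_iff {S : Set (V →ₗ[F] V')} {U : Submodule F V} {W : Submodule F V'} :
    msImage (span F S) U ≤ W ↔ ∀ a ∈ S, ∀ u ∈ U, a u ∈ W := by
  refine ⟨fun h a ha u hu => h (apply_mem_msImage (subset_span ha) hu), fun h => ?_⟩
  rw [msImage, span_le]
  rintro _ ⟨a, ha, u, hu, rfl⟩
  induction ha using span_induction with
  | mem a ha => exact h a ha u hu
  | zero => exact zero_mem W
  | add a b _ _ iha ihb => exact add_mem iha ihb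
  | smul c a _ iha => exact smul_mem W c iha

end msImage

section finrank

variable {F V V' : Type*} [Field F] [AddCommGroup V] [Module F V] [AddCommGroup V'] [Module F V']

lemma finrank_map_of_injective {f : V →ₗ[F] V'} (hf : Function.Injective f)
    (p : Submodule F V) :
    finrank F (p.map f) = finrank F p :=
  (equivMapOfInjective f hf p).finrank_eq.symm

lemma finrank_map_add_finrank_inf_ker [FiniteDimensional F V] (f : V →ₗ[F] V')
    (p : Submodule F V) :
    finrank F (p.map f) + finrank F ↥(p ⊓ LinearMap.ker f) = finrank F p := by
  have h := (f.domRestrict p).finrank_range_add_finrank_ker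
  rwa [LinearMap.range_domRestrict, LinearMap.ker_domRestrict,
    ← finrank_map_of_injective p.injective_subtype, map_comap_subtype] at h

end finrank

section SumEmbedding

variable {F ι κ : Type*} [Field F]

def inlVec : (ι → F) →ₗ[F] (ι ⊕ κ → F) where
  toFun u := Sum.elim u 0
  map_add' u v := by ext (_ | _) <;> simp
  map_smul' c u := by ext (_ | _) <;> simp

def inrVec : (κ → F) →ₗ[F] (ι ⊕ κ → F) where
  toFun u := Sum.elim 0 u
  map_add' u v := by ext (_ | _) <;> simp
  map_smul' c u := by ext (_ | _) <;> simp

lemma inlVec_apply (u : ι → F) : (inlVec u : ι ⊕ κ → F) = Sum.elim u (0 : κ → F) := rfl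

lemma inrVec_apply (u : κ → F) : (inrVec u : ι ⊕ κ → F) = Sum.elim (0 : ι → F) u := rfl

lemma inlVec_injective : Function.Injective (inlVec : (ι → F) →ₗ[F] (ι ⊕ κ → F)) :=
  fun _ _ h => funext fun x => congrFun h (Sum.inl x)

lemma inrVec_injective : Function.Injective (inrVec : (κ → F) →ₗ[F] (ι ⊕ κ → F)) :=
  fun _ _ h => funext fun x => congrFun h (Sum.inr x)

lemma range_inlVec :
    LinearMap.range (inlVec : (ι → F) →ₗ[F] (ι ⊕ κ → F)) =
      LinearMap.ker (LinearMap.funLeft F F Sum.inr) := by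
  ext w
  refine ⟨?_, fun hw => ⟨w ∘ Sum.inl, ?_⟩⟩
  · rintro ⟨u, rfl⟩
    ext
    rfl
  · ext (_ | x)
    · rfl
    · exact (congrFun hw x).symm

lemma range_inrVec :
    LinearMap.range (inrVec : (κ → F) →ₗ[F] (ι ⊕ κ → F)) =
      LinearMap.ker (LinearMap.funLeft F F Sum.inl) := by
  ext w
  refine ⟨?_, fun hw => ⟨w ∘ Sum.inr, ?_⟩⟩
  · rintro ⟨u, rfl⟩
    ext
    rfl
  · ext (x | _)
    · exact (congrFun hw x).symm
    · rfl

lemma finrank_map_funLeft_inl_add_finrank_comap_inrVec [Finite ι] [Finite κ]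
    (U : Submodule F (ι ⊕ κ → F)) :
    finrank F (U.map (LinearMap.funLeft F F Sum.inl)) + finrank F (U.comap inrVec) =
      finrank F U := by
  rw [← finrank_map_of_injective inrVec_injective (U.comap inrVec), map_comap_eq, range_inrVec,
    inf_comm]
  exact finrank_map_add_finrank_inf_ker _ U

end SumEmbedding

section Blocks

variable {F ι κ : Type*} [Field F] [Fintype ι]

lemma fromBlocks_zero_zero_mulVec_inrVec (A : Matrix ι ι F) (w : ι → F) :
    fromBlocks (0 : Matrix ι ι F) 0 A 0 *ᵥ inrVec w = 0 := by
  ext (_ | _) <;> simp [inrVec_apply, fromBlocks_mulVec]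

lemma fromBlocks_mulVec_inrVec (A B : Matrix ι ι F) (w : ι → F) :
    fromBlocks A B (0 : Matrix ι ι F) 0 *ᵥ inrVec w = inlVec (B *ᵥ w) := by
  ext (_ | _) <;> simp [inlVec_apply, inrVec_apply, fromBlocks_mulVec]

lemma funLeft_inr_fromBlocks_mulVec (A : Matrix ι ι F) (w : ι ⊕ ι → F) :
    LinearMap.funLeft F F Sum.inr (fromBlocks (0 : Matrix ι ι F) 0 A 0 *ᵥ w) =
      A *ᵥ LinearMap.funLeft F F Sum.inl w := by
  ext
  simp [LinearMap.funLeft, fromBlocks_mulVec]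

def matrixSpan (B : κ → Matrix ι ι F) : Submodule F ((ι → F) →ₗ[F] (ι → F)) :=
  span F (Set.range fun i => (B i).mulVecLin)

/-- `𝒜 = ⟨Y_i, Z⟩` with `Y_i = [[A, B_i], [0, 0]]` and `Z = [[0, 0], [A, 0]]`. -/
def blockSpan (A : Matrix ι ι F) (B : κ → Matrix ι ι F) :
    Submodule F ((ι ⊕ ι → F) →ₗ[F] (ι ⊕ ι → F)) :=
  span F (insert (fromBlocks 0 0 A 0).mulVecLin
    (Set.range fun i => (fromBlocks A (B i) 0 0).mulVecLin))

lemma msImage_blockSpan_map_inrVec (A : Matrix ι ι F) (B : κ → Matrix ι ι F)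
    (U : Submodule F (ι → F)) :
    msImage (blockSpan A B) (U.map inrVec) = (msImage (matrixSpan B) U).map inlVec := by
  apply le_antisymm
  · refine msImage_span_le_iff.2 ?_
    rintro a (rfl | ⟨i, rfl⟩) _ ⟨w, hw, rfl⟩
    · simp [fromBlocks_zero_zero_mulVec_inrVec]
    · rw [mulVecLin_apply, fromBlocks_mulVec_inrVec]
      exact mem_map_of_mem (apply_mem_msImage (subset_span (Set.mem_range_self i)) hw)
  · refine map_le_iff_le_comap.2 (msImage_span_le_iff.2 ?_)
    rintro _ ⟨i, rfl⟩ u hu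
    rw [mem_comap, mulVecLin_apply, ← fromBlocks_mulVec_inrVec A]
    exact apply_mem_msImage (A := blockSpan A B)
      (subset_span (Set.mem_insert_of_mem _ (Set.mem_range_self i))) (mem_map_of_mem hu)

lemma finrank_map_funLeft_inl_add_finrank_msImage_le [DecidableEq ι] {A : Matrix ι ι F}
    (hA : IsUnit A) (B : κ → Matrix ι ι F) (U : Submodule F (ι ⊕ ι → F)) :
    finrank F (U.map (LinearMap.funLeft F F Sum.inl)) +
        finrank F (msImage (matrixSpan B) (U.comap inrVec)) ≤
      finrank F (msImage (blockSpan A B) U) := by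
  set W := msImage (blockSpan A B) U
  have hZ : finrank F (U.map (LinearMap.funLeft F F Sum.inl)) ≤
      finrank F (W.map (LinearMap.funLeft F F Sum.inr)) := by
    rw [← finrank_map_of_injective (f := A.mulVecLin) (mulVec_injective_iff_isUnit.2 hA)]
    refine finrank_mono ?_
    rintro _ ⟨_, ⟨w, hw, rfl⟩, rfl⟩
    exact ⟨_, apply_mem_msImage (subset_span (Set.mem_insert _ _)) hw,
      funLeft_inr_fromBlocks_mulVec A w⟩
  have hY : finrank F (msImage (matrixSpan B) (U.comap inrVec)) ≤
      finrank F ↥(W ⊓ LinearMap.ker (LinearMap.funLeft F F Sum.inr)) := by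
    rw [← finrank_map_of_injective inlVec_injective, ← msImage_blockSpan_map_inrVec]
    refine finrank_mono (le_inf (msImage_mono (map_comap_le _ _)) ?_)
    rw [msImage_blockSpan_map_inrVec, ← range_inlVec]
    exact LinearMap.map_le_range
  have hW := finrank_map_add_finrank_inf_ker (LinearMap.funLeft F F Sum.inr) W
  omega

end Blocks

theorem stmt19 (F : Type*) [Field F] (n m : ℕ)
    (B : Fin m → Matrix (Fin n) (Fin n) F)
    (A : Matrix (Fin n) (Fin n) F) (hA : IsUnit A) :
    -- disc(𝒜) = disc(ℬ), where 𝒜 = ⟨Y_1, …, Y_m, Z⟩ with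
    -- Y_i = [[A, B_i],[0,0]] and Z = [[0,0],[A,0]]:
    -- for every c, 𝒜 has a c-discrepancy subspace iff ℬ does
    ∀ c : ℕ,
      (∃ U : Submodule F (Fin n ⊕ Fin n → F),
        finrank F (msImage (Submodule.span F
            (insert (Matrix.fromBlocks 0 0 A 0).mulVecLin
              (Set.range fun i => (Matrix.fromBlocks A (B i) 0 0).mulVecLin))) U)
          + c ≤ finrank F U) ↔
      (∃ U : Submodule F (Fin n → F),
        finrank F (msImage (Submodule.span F
            (Set.range fun i => (B i).mulVecLin)) U) + c ≤ finrank F U) := by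
  intro c
  change (∃ U, finrank F (msImage (blockSpan A B) U) + c ≤ finrank F U) ↔
    ∃ U, finrank F (msImage (matrixSpan B) U) + c ≤ finrank F U
  constructor
  · rintro ⟨U, hU⟩
    refine ⟨U.comap inrVec, ?_⟩
    have hU' := finrank_map_funLeft_inl_add_finrank_comap_inrVec U
    have hImage := finrank_map_funLeft_inl_add_finrank_msImage_le hA B U
    omega
  · rintro ⟨U, hU⟩
    refine ⟨U.map inrVec, ?_⟩
    rwa [msImage_blockSpan_map_inrVec, finrank_map_of_injective inlVec_injective,
      finrank_map_of_injective inrVec_injective]
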